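/- arXiv:1808.05486 — 3 statements merged into one kernel-verified Lean document; each statement's English description precedes it below -/
import Mathlib

section
/- Let u_S : ℝ² × ℝ → ℝ² and ψ, D : ℝ² × ℝ → ℝ be smooth with D > 0 everywhere, satisfying ∂_t ψ + u_S·∇ψ = 0 and ∂_t D + div(D u_S) = 0 on ℝ² × ℝ. Define the vector field w_S := (1/D)(−∂_z ψ, ∂_x ψ). Then w_S satisfies the relabelling-symmetry equation ∂_t w_S + u_S·∇w_S − w_S·∇u_S = 0 on ℝ² × ℝ. -/
/-- Partial derivative in time of a time-dependent field on the slice ℝ². -/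
noncomputable def pt {α : Type*} [NormedAddCommGroup α] [NormedSpace ℝ α]
    (g : (ℝ × ℝ) → ℝ → α) (x : ℝ × ℝ) (t : ℝ) : α :=
  deriv (fun τ => g x τ) t

/-- Spatial directional derivative of a time-dependent field, in direction `v`. -/
noncomputable def dsp {α : Type*} [NormedAddCommGroup α] [NormedSpace ℝ α]
    (g : (ℝ × ℝ) → ℝ → α) (x : ℝ × ℝ) (t : ℝ) (v : ℝ × ℝ) : α :=
  fderiv ℝ (fun y => g y t) x v

/-- Unit vector in the x-direction. -/
def ex : ℝ × ℝ := (1, 0)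

/-- Unit vector in the z-direction. -/
def ez : ℝ × ℝ := (0, 1)

/-- Euclidean dot product on ℝ². -/
def dot (a b : ℝ × ℝ) : ℝ := a.1 * b.1 + a.2 * b.2

/-- Spatial gradient of a time-dependent scalar field. -/
noncomputable def grad (g : (ℝ × ℝ) → ℝ → ℝ) (x : ℝ × ℝ) (t : ℝ) : ℝ × ℝ :=
  (dsp g x t ex, dsp g x t ez)

/-- `(gradT u w)ᵢ = Σⱼ (∂ᵢ uⱼ) wⱼ`, i.e. `(∇u)ᵀ w`. -/
noncomputable def gradT (u w : (ℝ × ℝ) → ℝ → ℝ × ℝ) (x : ℝ × ℝ) (t : ℝ) : ℝ × ℝ :=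
  (dot (dsp u x t ex) (w x t), dot (dsp u x t ez) (w x t))

/-- Divergence `∂ₓ u₁ + ∂_z u₂` of a time-dependent vector field. -/
noncomputable def div2 (u : (ℝ × ℝ) → ℝ → ℝ × ℝ) (x : ℝ × ℝ) (t : ℝ) : ℝ :=
  dsp (fun y τ => (u y τ).1) x t ex + dsp (fun y τ => (u y τ).2) x t ez

/-- A time-dependent field is smooth (C^∞) jointly in space and time. -/
def Smooth2 {α : Type*} [NormedAddCommGroup α] [NormedSpace ℝ α]
    (g : (ℝ × ℝ) → ℝ → α) : Prop :=
  ContDiff ℝ (⊤ : ℕ∞) (fun p : (ℝ × ℝ) × ℝ => g p.1 p.2)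

abbrev P2 := (ℝ × ℝ) × ℝ

def eX : P2 := (ex, 0)
def eZ : P2 := (ez, 0)
def eT : P2 := (0, 1)

lemma pt_eq {α : Type*} [NormedAddCommGroup α] [NormedSpace ℝ α]
    {g : (ℝ × ℝ) → ℝ → α} (hg : Smooth2 g) (x : ℝ × ℝ) (t : ℝ) :
    pt g x t = fderiv ℝ (fun p : P2 => g p.1 p.2) (x, t) eT := by
  have hG : DifferentiableAt ℝ (fun p : P2 => g p.1 p.2) (x, t) :=
    (hg.differentiable (by simp)).differentiableAt
  have h1 : HasDerivAt (fun τ : ℝ => ((x, τ) : P2)) ((0 : ℝ × ℝ), (1 : ℝ)) t :=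
    HasDerivAt.prodMk (hasDerivAt_const t x) (hasDerivAt_id t)
  exact (hG.hasFDerivAt.comp_hasDerivAt t h1).deriv

lemma dsp_eq {α : Type*} [NormedAddCommGroup α] [NormedSpace ℝ α]
    {g : (ℝ × ℝ) → ℝ → α} (hg : Smooth2 g) (x : ℝ × ℝ) (t : ℝ) (v : ℝ × ℝ) :
    dsp g x t v = fderiv ℝ (fun p : P2 => g p.1 p.2) (x, t) (v, 0) := by
  have hG : DifferentiableAt ℝ (fun p : P2 => g p.1 p.2) (x, t) :=
    (hg.differentiable (by simp)).differentiableAt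
  have h1 : HasFDerivAt (fun y : ℝ × ℝ => ((y, t) : P2))
      (ContinuousLinearMap.inl ℝ (ℝ × ℝ) ℝ) x := hasFDerivAt_prodMk_left x t
  have h2 := (hG.hasFDerivAt.comp x h1).fderiv
  show fderiv ℝ (fun y => g y t) x v = _
  rw [show (fun y : ℝ × ℝ => g y t) =
    (fun p : P2 => g p.1 p.2) ∘ (fun y : ℝ × ℝ => (y, t)) from rfl, h2]
  simp

lemma contDiff_dfd {α : Type*} [NormedAddCommGroup α] [NormedSpace ℝ α]
    {G : P2 → α} (hG : ContDiff ℝ (⊤ : ℕ∞) G) (v : P2) :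
    ContDiff ℝ (⊤ : ℕ∞) (fun p => fderiv ℝ G p v) :=
  (hG.fderiv_right (by simp)).clm_apply contDiff_const

lemma sym_second {α : Type*} [NormedAddCommGroup α] [NormedSpace ℝ α]
    {G : P2 → α} (hG : ContDiff ℝ (⊤ : ℕ∞) G) (p v w : P2) :
    fderiv ℝ (fun q => fderiv ℝ G q v) p w = fderiv ℝ (fun q => fderiv ℝ G q w) p v := by
  have hd : DifferentiableAt ℝ (fderiv ℝ G) p :=
    ((hG.fderiv_right (m := (⊤ : ℕ∞)) (by simp)).differentiable (by simp)).differentiableAt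
  have h1 : fderiv ℝ (fun q => fderiv ℝ G q v) p w = fderiv ℝ (fderiv ℝ G) p w v := by
    rw [fderiv_clm_apply hd (differentiableAt_const v)]; simp
  have h2 : fderiv ℝ (fun q => fderiv ℝ G q w) p v = fderiv ℝ (fderiv ℝ G) p v w := by
    rw [fderiv_clm_apply hd (differentiableAt_const w)]; simp
  have hsym := hG.contDiffAt.isSymmSndFDerivAt (by rw [minSmoothness_of_isRCLikeNormedField]; exact WithTop.coe_le_coe.mpr (le_top : (2 : ℕ∞) ≤ ⊤)) (x := p)
  rw [h1, h2, hsym w v]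

lemma dadd {f g : P2 → ℝ} {p : P2} (hf : DifferentiableAt ℝ f p)
    (hg : DifferentiableAt ℝ g p) (Y : P2) :
    fderiv ℝ (fun q => f q + g q) p Y = fderiv ℝ f p Y + fderiv ℝ g p Y := by
  rw [fderiv_fun_add hf hg]; rfl

lemma dmul {f g : P2 → ℝ} {p : P2} (hf : DifferentiableAt ℝ f p)
    (hg : DifferentiableAt ℝ g p) (Y : P2) :
    fderiv ℝ (fun q => f q * g q) p Y = fderiv ℝ f p Y * g p + f p * fderiv ℝ g p Y := by
  rw [fderiv_fun_mul hf hg]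
  simp only [ContinuousLinearMap.add_apply, ContinuousLinearMap.smul_apply, smul_eq_mul]
  ring

lemma dneg {f : P2 → ℝ} {p : P2} (Y : P2) :
    fderiv ℝ (fun q => -(f q)) p Y = -(fderiv ℝ f p Y) := by
  rw [fderiv_fun_neg]; rfl

lemma dinv {f : P2 → ℝ} {p : P2} (hf : DifferentiableAt ℝ f p) (h0 : f p ≠ 0) (Y : P2) :
    fderiv ℝ (fun q => (f q)⁻¹) p Y = -((f p) ^ 2)⁻¹ * fderiv ℝ f p Y := by
  have h := fderiv_comp (𝕜 := ℝ) (g := Inv.inv) p (differentiableAt_inv h0) hf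
  rw [show (fun q => (f q)⁻¹) = Inv.inv ∘ f from rfl, h, fderiv_inv]
  simp [mul_comm]

lemma dprod {f g : P2 → ℝ} {p : P2} (hf : DifferentiableAt ℝ f p)
    (hg : DifferentiableAt ℝ g p) (Y : P2) :
    fderiv ℝ (fun q => ((f q, g q) : ℝ × ℝ)) p Y = (fderiv ℝ f p Y, fderiv ℝ g p Y) := by
  rw [(hf.hasFDerivAt.prodMk hg.hasFDerivAt).fderiv]; rfl

lemma dlin (f : P2 → ℝ) (q : P2) (v : ℝ × ℝ) :
    fderiv ℝ f q ((v, 0) : P2) = v.1 * fderiv ℝ f q eX + v.2 * fderiv ℝ f q eZ := by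
  have hv : ((v, 0) : P2) = v.1 • eX + v.2 • eZ := by
    simp [eX, eZ, ex, ez, Prod.ext_iff]
  rw [hv, map_add, map_smul, map_smul, smul_eq_mul, smul_eq_mul]

lemma key (Ψ Dd : P2 → ℝ) (U : P2 → ℝ × ℝ)
    (hΨ : ContDiff ℝ (⊤ : ℕ∞) Ψ) (hDD : ContDiff ℝ (⊤ : ℕ∞) Dd) (hUU : ContDiff ℝ (⊤ : ℕ∞) U)
    (hDne : ∀ p, Dd p ≠ 0)
    (heq1 : ∀ p, fderiv ℝ Ψ p eT + fderiv ℝ Ψ p (U p, 0) = 0)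
    (heq2 : ∀ p, fderiv ℝ Dd p eT
        + (fderiv ℝ (fun q => Dd q * (U q).1) p eX
          + fderiv ℝ (fun q => Dd q * (U q).2) p eZ) = 0)
    (p₀ : P2) :
    fderiv ℝ (fun q => (Dd q)⁻¹ • ((-(fderiv ℝ Ψ q eZ), fderiv ℝ Ψ q eX) : ℝ × ℝ)) p₀ eT
      + fderiv ℝ (fun q => (Dd q)⁻¹ • ((-(fderiv ℝ Ψ q eZ), fderiv ℝ Ψ q eX) : ℝ × ℝ)) p₀
          (U p₀, 0)
      - fderiv ℝ U p₀
          ((Dd p₀)⁻¹ • ((-(fderiv ℝ Ψ p₀ eZ), fderiv ℝ Ψ p₀ eX) : ℝ × ℝ), 0) = 0 := by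
  -- differentiability facts
  have hA : Differentiable ℝ (fun q => fderiv ℝ Ψ q eX) :=
    (contDiff_dfd hΨ eX).differentiable (by simp)
  have hB : Differentiable ℝ (fun q => fderiv ℝ Ψ q eZ) :=
    (contDiff_dfd hΨ eZ).differentiable (by simp)
  have hT : Differentiable ℝ (fun q => fderiv ℝ Ψ q eT) :=
    (contDiff_dfd hΨ eT).differentiable (by simp)
  have hDd : Differentiable ℝ Dd := hDD.differentiable (by simp)
  have hU1 : Differentiable ℝ (fun q => (U q).1) :=
    (contDiff_fst.comp hUU).differentiable (by simp)
  have hU2 : Differentiable ℝ (fun q => (U q).2) :=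
    (contDiff_snd.comp hUU).differentiable (by simp)
  have hInv : Differentiable ℝ (fun q => (Dd q)⁻¹) := hDd.inv hDne
  have hW1d : Differentiable ℝ (fun q => (Dd q)⁻¹ * (-(fderiv ℝ Ψ q eZ))) := hInv.mul hB.neg
  have hW2d : Differentiable ℝ (fun q => (Dd q)⁻¹ * fderiv ℝ Ψ q eX) := hInv.mul hA
  -- symmetry of second derivatives (canonical forms)
  have hsym1 : fderiv ℝ (fun q => fderiv ℝ Ψ q eZ) p₀ eX
      = fderiv ℝ (fun q => fderiv ℝ Ψ q eX) p₀ eZ := sym_second hΨ p₀ eZ eX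
  have hsym2 : fderiv ℝ (fun q => fderiv ℝ Ψ q eT) p₀ eX
      = fderiv ℝ (fun q => fderiv ℝ Ψ q eX) p₀ eT := sym_second hΨ p₀ eT eX
  have hsym3 : fderiv ℝ (fun q => fderiv ℝ Ψ q eT) p₀ eZ
      = fderiv ℝ (fun q => fderiv ℝ Ψ q eZ) p₀ eT := sym_second hΨ p₀ eT eZ
  -- transport equation, differentiated
  have hF0 : (fun q => fderiv ℝ Ψ q eT
      + ((U q).1 * fderiv ℝ Ψ q eX + (U q).2 * fderiv ℝ Ψ q eZ)) = fun _ => (0 : ℝ) := by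
    funext q
    rw [show (U q).1 * fderiv ℝ Ψ q eX + (U q).2 * fderiv ℝ Ψ q eZ
      = fderiv ℝ Ψ q (U q, 0) from (dlin Ψ q (U q)).symm]
    exact heq1 q
  have hE1 : ∀ Y : P2, fderiv ℝ (fun q => fderiv ℝ Ψ q eT) p₀ Y
      + ((fderiv ℝ (fun q => (U q).1) p₀ Y * fderiv ℝ Ψ p₀ eX
            + (U p₀).1 * fderiv ℝ (fun q => fderiv ℝ Ψ q eX) p₀ Y)
        + (fderiv ℝ (fun q => (U q).2) p₀ Y * fderiv ℝ Ψ p₀ eZ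
            + (U p₀).2 * fderiv ℝ (fun q => fderiv ℝ Ψ q eZ) p₀ Y)) = 0 := by
    intro Y
    have h : fderiv ℝ (fun q => fderiv ℝ Ψ q eT
        + ((U q).1 * fderiv ℝ Ψ q eX + (U q).2 * fderiv ℝ Ψ q eZ)) p₀ Y = 0 := by
      rw [hF0]; simp
    rw [dadd (g := fun q => (U q).1 * fderiv ℝ Ψ q eX + (U q).2 * fderiv ℝ Ψ q eZ) (hT p₀) (((hU1.mul hA).add (hU2.mul hB)) p₀),
        dadd (f := fun q => (U q).1 * fderiv ℝ Ψ q eX) (g := fun q => (U q).2 * fderiv ℝ Ψ q eZ) ((hU1.mul hA) p₀) ((hU2.mul hB) p₀),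
        dmul (hU1 p₀) (hA p₀), dmul (hU2 p₀) (hB p₀)] at h
    exact h
  have hE1x := hE1 eX
  have hE1z := hE1 eZ
  rw [hsym2] at hE1x
  rw [hsym1] at hE1x
  rw [hsym3] at hE1z
  -- continuity equation at p₀
  have hE2 := heq2 p₀
  rw [dmul (hDd p₀) (hU1 p₀) eX, dmul (hDd p₀) (hU2 p₀) eZ] at hE2
  -- expand the goal
  have hW1Y : ∀ Y : P2, fderiv ℝ (fun q => (Dd q)⁻¹ * (-(fderiv ℝ Ψ q eZ))) p₀ Y
      = -((Dd p₀) ^ 2)⁻¹ * fderiv ℝ Dd p₀ Y * (-(fderiv ℝ Ψ p₀ eZ))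
        + (Dd p₀)⁻¹ * (-(fderiv ℝ (fun q => fderiv ℝ Ψ q eZ) p₀ Y)) := by
    intro Y
    rw [dmul (g := fun q => -(fderiv ℝ Ψ q eZ)) (hInv p₀) (hB.neg p₀), dinv (hDd p₀) (hDne p₀), dneg]
  have hW2Y : ∀ Y : P2, fderiv ℝ (fun q => (Dd q)⁻¹ * fderiv ℝ Ψ q eX) p₀ Y
      = -((Dd p₀) ^ 2)⁻¹ * fderiv ℝ Dd p₀ Y * fderiv ℝ Ψ p₀ eX
        + (Dd p₀)⁻¹ * fderiv ℝ (fun q => fderiv ℝ Ψ q eX) p₀ Y := by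
    intro Y
    rw [dmul (hInv p₀) (hA p₀), dinv (hDd p₀) (hDne p₀)]
  have hgU : ∀ Y : P2, fderiv ℝ U p₀ Y
      = (fderiv ℝ (fun q => (U q).1) p₀ Y, fderiv ℝ (fun q => (U q).2) p₀ Y) :=
    fun Y => dprod (hU1 p₀) (hU2 p₀) Y
  have hgW : ∀ Y : P2,
      fderiv ℝ (fun q => (Dd q)⁻¹ • ((-(fderiv ℝ Ψ q eZ), fderiv ℝ Ψ q eX) : ℝ × ℝ)) p₀ Y
      = (fderiv ℝ (fun q => (Dd q)⁻¹ * (-(fderiv ℝ Ψ q eZ))) p₀ Y,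
         fderiv ℝ (fun q => (Dd q)⁻¹ * fderiv ℝ Ψ q eX) p₀ Y) :=
    fun Y => dprod (hW1d p₀) (hW2d p₀) Y
  rw [hgW, hgW, hgU]
  rw [dlin (fun q => (Dd q)⁻¹ * (-(fderiv ℝ Ψ q eZ))) p₀ (U p₀),
      dlin (fun q => (Dd q)⁻¹ * fderiv ℝ Ψ q eX) p₀ (U p₀),
      dlin (fun q => (U q).1) p₀ _, dlin (fun q => (U q).2) p₀ _,
      hW1Y, hW1Y, hW1Y, hW2Y, hW2Y, hW2Y, hsym1]
  -- reduce to two scalar identities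
  set a := fderiv ℝ Ψ p₀ eX
  set b := fderiv ℝ Ψ p₀ eZ
  set d := Dd p₀ with hd
  set u1 := (U p₀).1
  set u2 := (U p₀).2
  simp only [Prod.smul_mk, smul_eq_mul, Prod.mk_add_mk, Prod.mk_sub_mk, Prod.mk_eq_zero]
  have hdne : d ≠ 0 := hDne p₀
  have hinv : d * d⁻¹ = 1 := mul_inv_cancel₀ hdne
  constructor
  · linear_combination (b / d ^ 2) * hE2 - (1 / d) * hE1z
      + (-(d⁻¹ * b * ((fderiv ℝ (fun q => (U q).1) p₀) eX
          + (fderiv ℝ (fun q => (U q).2) p₀) eZ))) * hinv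
  · linear_combination (-(a / d ^ 2)) * hE2 + (1 / d) * hE1x
      + (d⁻¹ * a * ((fderiv ℝ (fun q => (U q).1) p₀) eX
          + (fderiv ℝ (fun q => (U q).2) p₀) eZ)) * hinv

/-- If ψ is transported (`∂_t ψ + u_S·∇ψ = 0`) and D satisfies the continuity equation
(`∂_t D + div(D u_S) = 0`, `D > 0`), then `w_S = (1/D)(−∂_z ψ, ∂_x ψ)` satisfies the
relabelling-symmetry equation `∂_t w_S + u_S·∇w_S − w_S·∇u_S = 0`. -/
theorem density_relabelling_generator
    (uS : (ℝ × ℝ) → ℝ → ℝ × ℝ) (ψ D : (ℝ × ℝ) → ℝ → ℝ)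
    (huS : Smooth2 uS) (hψ : Smooth2 ψ) (hD : Smooth2 D)
    (hDpos : ∀ x t, 0 < D x t)
    (hψeq : ∀ x t, pt ψ x t + dsp ψ x t (uS x t) = 0)
    (hDeq : ∀ x t, pt D x t + div2 (fun y τ => D y τ • uS y τ) x t = 0) :
    ∀ (x : ℝ × ℝ) (t : ℝ),
      pt (fun y τ => (D y τ)⁻¹ • ((-dsp ψ y τ ez, dsp ψ y τ ex) : ℝ × ℝ)) x t
        + dsp (fun y τ => (D y τ)⁻¹ • ((-dsp ψ y τ ez, dsp ψ y τ ex) : ℝ × ℝ)) x t (uS x t)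
        - dsp uS x t ((D x t)⁻¹ • ((-dsp ψ x t ez, dsp ψ x t ex) : ℝ × ℝ)) = 0 := by
  intro x t
  have hDne : ∀ p : P2, D p.1 p.2 ≠ 0 := fun p => ne_of_gt (hDpos p.1 p.2)
  have hfun : (fun y τ => (D y τ)⁻¹ • ((-dsp ψ y τ ez, dsp ψ y τ ex) : ℝ × ℝ))
      = fun y τ => (D y τ)⁻¹ •
          ((-(fderiv ℝ (fun p : P2 => ψ p.1 p.2) (y, τ) (ez, 0)),
            fderiv ℝ (fun p : P2 => ψ p.1 p.2) (y, τ) (ex, 0)) : ℝ × ℝ) := by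
    funext y τ
    rw [dsp_eq hψ, dsp_eq hψ]
  have hWsm : Smooth2 (fun y τ => (D y τ)⁻¹ •
      ((-(fderiv ℝ (fun p : P2 => ψ p.1 p.2) (y, τ) (ez, 0)),
        fderiv ℝ (fun p : P2 => ψ p.1 p.2) (y, τ) (ex, 0)) : ℝ × ℝ)) := by
    have h1 : ContDiff ℝ (⊤ : ℕ∞) (fun p : P2 => (D p.1 p.2)⁻¹ •
        ((-(fderiv ℝ (fun q : P2 => ψ q.1 q.2) p (ez, 0)),
          fderiv ℝ (fun q : P2 => ψ q.1 q.2) p (ex, 0)) : ℝ × ℝ)) :=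
      (hD.inv hDne).smul
        (((contDiff_dfd hψ ((ez, 0) : P2)).neg).prodMk (contDiff_dfd hψ ((ex, 0) : P2)))
    exact h1
  have heq1' : ∀ p : P2, fderiv ℝ (fun q : P2 => ψ q.1 q.2) p eT
      + fderiv ℝ (fun q : P2 => ψ q.1 q.2) p (uS p.1 p.2, 0) = 0 := by
    intro p
    have h := hψeq p.1 p.2
    rw [pt_eq hψ, dsp_eq hψ] at h
    exact h
  have hsm1 : Smooth2 (fun y τ => ((D y τ • uS y τ : ℝ × ℝ)).1) := by
    have : ContDiff ℝ (⊤ : ℕ∞) (fun p : P2 => ((D p.1 p.2 • uS p.1 p.2 : ℝ × ℝ)).1) :=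
      contDiff_fst.comp (hD.smul huS)
    exact this
  have hsm2 : Smooth2 (fun y τ => ((D y τ • uS y τ : ℝ × ℝ)).2) := by
    have : ContDiff ℝ (⊤ : ℕ∞) (fun p : P2 => ((D p.1 p.2 • uS p.1 p.2 : ℝ × ℝ)).2) :=
      contDiff_snd.comp (hD.smul huS)
    exact this
  have heq2' : ∀ p : P2, fderiv ℝ (fun q : P2 => D q.1 q.2) p eT
      + (fderiv ℝ (fun q : P2 => D q.1 q.2 * (uS q.1 q.2).1) p eX
        + fderiv ℝ (fun q : P2 => D q.1 q.2 * (uS q.1 q.2).2) p eZ) = 0 := by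
    intro p
    have h := hDeq p.1 p.2
    unfold div2 at h
    rw [pt_eq hD, dsp_eq hsm1, dsp_eq hsm2] at h
    exact h
  rw [hfun, pt_eq hWsm, dsp_eq hWsm, dsp_eq hψ x t ez, dsp_eq hψ x t ex, dsp_eq huS]
  exact key (fun p : P2 => ψ p.1 p.2) (fun p : P2 => D p.1 p.2)
    (fun p : P2 => uS p.1 p.2) hψ hD huS hDne heq1' heq2' (x, t)
end

section
/- Let s ∈ ℝ and let a, u_S, w_S : ℝ² × ℝ → ℝ² and m_T, b, c, θ_S, u_T, w_T, D : ℝ² × ℝ → ℝ be smooth, satisfying on ℝ² × ℝ: (i) ∂_t a + u_S·∇a + (∇u_S)ᵀa + m_T ∇u_T + b ∇θ_S − ∇c = 0; (ii) ∂_t m_T + u_S·∇m_T + s·b = 0; (iii) ∂_t w_S + [u_S, w_S] = 0 and ∂_t w_T + u_S·∇w_T − w_S·∇u_T = 0; (iv) ∂_t D + div(D u_S) = 0 and div(D w_S) = 0; (v) w_S·∇θ_S + s·w_T = 0. Then the Noether density G := D(a·w_S + m_T w_T) satisfies the local conservation law ∂_t G + div( G·u_S − c·D·w_S ) = 0 on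 ℝ² × ℝ. -/
lemma Smooth2.hasDerivAt_time {α : Type*} [NormedAddCommGroup α] [NormedSpace ℝ α]
    {g : (ℝ × ℝ) → ℝ → α} (h : Smooth2 g) (x : ℝ × ℝ) (t : ℝ) :
    HasDerivAt (fun τ => g x τ) (pt g x t) t := by
  have hd : DifferentiableAt ℝ (fun τ => g x τ) t := by
    have h2 : Differentiable ℝ (fun p : (ℝ × ℝ) × ℝ => g p.1 p.2) := h.differentiable (by simp)
    exact ((h2.comp ((differentiable_const x).prodMk differentiable_id)).differentiableAt :)
  exact hd.hasDerivAt

lemma Smooth2.hasFDerivAt_space {α : Type*} [NormedAddCommGroup α] [NormedSpace ℝ α]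
    {g : (ℝ × ℝ) → ℝ → α} (h : Smooth2 g) (x : ℝ × ℝ) (t : ℝ) :
    HasFDerivAt (fun y => g y t) (fderiv ℝ (fun y => g y t) x) x := by
  have hd : DifferentiableAt ℝ (fun y => g y t) x := by
    have h2 : Differentiable ℝ (fun p : (ℝ × ℝ) × ℝ => g p.1 p.2) := h.differentiable (by simp)
    exact ((h2.comp (differentiable_id.prodMk (differentiable_const t))).differentiableAt :)
  exact hd.hasFDerivAt

lemma HasDerivAt.fst' {f : ℝ → ℝ × ℝ} {f' : ℝ × ℝ} {t : ℝ} (h : HasDerivAt f f' t) :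
    HasDerivAt (fun τ => (f τ).1) f'.1 t := by
  simpa using (h.hasFDerivAt.fst).hasDerivAt

lemma HasDerivAt.snd' {f : ℝ → ℝ × ℝ} {f' : ℝ × ℝ} {t : ℝ} (h : HasDerivAt f f' t) :
    HasDerivAt (fun τ => (f τ).2) f'.2 t := by
  simpa using (h.hasFDerivAt.snd).hasDerivAt

lemma dsp_basis {α : Type*} [NormedAddCommGroup α] [NormedSpace ℝ α]
    (g : (ℝ × ℝ) → ℝ → α) (x : ℝ × ℝ) (t : ℝ) (v : ℝ × ℝ) :
    dsp g x t v = v.1 • dsp g x t ex + v.2 • dsp g x t ez := by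
  have hv : v = v.1 • ex + v.2 • ez := by
    simp [ex, ez, Prod.ext_iff]
  unfold dsp
  conv_lhs => rw [hv]
  rw [map_add, map_smul, map_smul]

/-- Local Noether conservation law for slice models: under the slice Euler–Poincaré
equations (i)–(ii), the relabelling-symmetry equations (iii), the continuity and
density-symmetry conditions (iv), and the θ-symmetry condition (v), the Noether
density `G = D(a·w_S + m_T w_T)` satisfies
`∂_t G + div(G u_S − c D w_S) = 0`. -/
theorem slice_noether_local_conservation
    (s : ℝ) (a uS wS : (ℝ × ℝ) → ℝ → ℝ × ℝ)
    (mT b c θS uT wT D : (ℝ × ℝ) → ℝ → ℝ)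
    (ha : Smooth2 a) (huS : Smooth2 uS) (hwS : Smooth2 wS) (hmT : Smooth2 mT)
    (hb : Smooth2 b) (hc : Smooth2 c) (hθS : Smooth2 θS) (huT : Smooth2 uT)
    (hwT : Smooth2 wT) (hD : Smooth2 D)
    (hi : ∀ x t, pt a x t + dsp a x t (uS x t) + gradT uS a x t
      + mT x t • grad uT x t + b x t • grad θS x t - grad c x t = 0)
    (hii : ∀ x t, pt mT x t + dsp mT x t (uS x t) + s * b x t = 0)
    (hiiiS : ∀ x t, pt wS x t + dsp wS x t (uS x t) - dsp uS x t (wS x t) = 0)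
    (hiiiT : ∀ x t, pt wT x t + dsp wT x t (uS x t) - dsp uT x t (wS x t) = 0)
    (hivD : ∀ x t, pt D x t + div2 (fun y τ => D y τ • uS y τ) x t = 0)
    (hivW : ∀ x t, div2 (fun y τ => D y τ • wS y τ) x t = 0)
    (hv : ∀ x t, dsp θS x t (wS x t) + s * wT x t = 0) :
    ∀ (x : ℝ × ℝ) (t : ℝ),
      pt (fun y τ => D y τ * (dot (a y τ) (wS y τ) + mT y τ * wT y τ)) x t
        + div2 (fun y τ =>
            (D y τ * (dot (a y τ) (wS y τ) + mT y τ * wT y τ)) • uS y τ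
              - (c y τ * D y τ) • wS y τ) x t = 0 := by
  intro x t
  have haT := ha.hasDerivAt_time x t
  have hwST := hwS.hasDerivAt_time x t
  have hmTT := hmT.hasDerivAt_time x t
  have hwTT := hwT.hasDerivAt_time x t
  have hDT := hD.hasDerivAt_time x t
  have haX := ha.hasFDerivAt_space x t
  have huSX := huS.hasFDerivAt_space x t
  have hwSX := hwS.hasFDerivAt_space x t
  have hmTX := hmT.hasFDerivAt_space x t
  have hcX := hc.hasFDerivAt_space x t
  have hwTX := hwT.hasFDerivAt_space x t
  have hDX := hD.hasFDerivAt_space x t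
  -- time part
  have hGt := hDT.mul ((((haT.fst'.mul hwST.fst').add (haT.snd'.mul hwST.snd'))).add
    (hmTT.mul hwTT))
  have e1 : pt (fun y τ => D y τ * (dot (a y τ) (wS y τ) + mT y τ * wT y τ)) x t = _ :=
    hGt.deriv
  rw [e1]
  -- space part
  simp only [div2, Prod.fst_sub, Prod.snd_sub, Prod.smul_fst, Prod.smul_snd, smul_eq_mul, dsp]
  have hFa := hDX.mul ((((haX.fst.mul hwSX.fst).add (haX.snd.mul hwSX.snd))).add
    (hmTX.mul hwTX))
  have hH1 : HasFDerivAt (fun y => D y t * (dot (a y t) (wS y t) + mT y t * wT y t) * (uS y t).1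
      - c y t * D y t * (wS y t).1) _ x := (hFa.mul huSX.fst).sub ((hcX.mul hDX).mul hwSX.fst)
  have hH2 : HasFDerivAt (fun y => D y t * (dot (a y t) (wS y t) + mT y t * wT y t) * (uS y t).2
      - c y t * D y t * (wS y t).2) _ x := (hFa.mul huSX.snd).sub ((hcX.mul hDX).mul hwSX.snd)
  rw [hH1.fderiv, hH2.fderiv]
  -- hypotheses
  have h1 := hi x t
  rw [dsp_basis a x t (uS x t)] at h1
  have h1a := congrArg Prod.fst h1
  have h1b := congrArg Prod.snd h1
  simp only [gradT, grad, dot, dsp, Prod.fst_add, Prod.snd_add, Prod.fst_sub, Prod.snd_sub,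
    Prod.smul_fst, Prod.smul_snd, smul_eq_mul, Prod.fst_zero, Prod.snd_zero] at h1a h1b
  have h2 := hii x t
  rw [dsp_basis mT x t (uS x t)] at h2
  simp only [dsp, smul_eq_mul] at h2
  have h3 := hiiiS x t
  rw [dsp_basis wS x t (uS x t), dsp_basis uS x t (wS x t)] at h3
  have h3a := congrArg Prod.fst h3
  have h3b := congrArg Prod.snd h3
  simp only [dsp, Prod.fst_add, Prod.snd_add, Prod.fst_sub, Prod.snd_sub, Prod.smul_fst,
    Prod.smul_snd, smul_eq_mul, Prod.fst_zero, Prod.snd_zero] at h3a h3b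
  have h4 := hiiiT x t
  rw [dsp_basis wT x t (uS x t), dsp_basis uT x t (wS x t)] at h4
  simp only [dsp, smul_eq_mul] at h4
  have h5 := hivD x t
  simp only [div2, Prod.smul_fst, Prod.smul_snd, smul_eq_mul, dsp] at h5
  rw [(show HasFDerivAt (fun y => D y t * (uS y t).1) _ x from hDX.mul huSX.fst).fderiv,
    (show HasFDerivAt (fun y => D y t * (uS y t).2) _ x from hDX.mul huSX.snd).fderiv] at h5
  have h6 := hivW x t
  simp only [div2, Prod.smul_fst, Prod.smul_snd, smul_eq_mul, dsp] at h6
  rw [(show HasFDerivAt (fun y => D y t * (wS y t).1) _ x from hDX.mul hwSX.fst).fderiv,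
    (show HasFDerivAt (fun y => D y t * (wS y t).2) _ x from hDX.mul hwSX.snd).fderiv] at h6
  have h7 := hv x t
  rw [dsp_basis θS x t (wS x t)] at h7
  simp only [dsp, smul_eq_mul] at h7
  simp only [ContinuousLinearMap.add_apply, ContinuousLinearMap.sub_apply,
    ContinuousLinearMap.smul_apply, ContinuousLinearMap.coe_comp', Function.comp_apply,
    ContinuousLinearMap.coe_fst', ContinuousLinearMap.coe_snd', smul_eq_mul, Pi.mul_apply,
    Pi.add_apply] at h5 h6 ⊢
  linear_combination
    ((a x t).1 * (wS x t).1 + (a x t).2 * (wS x t).2 + mT x t * wT x t) * h5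
    + (D x t * (wS x t).1) * h1a + (D x t * (wS x t).2) * h1b
    + (D x t * wT x t) * h2
    + (D x t * (a x t).1) * h3a + (D x t * (a x t).2) * h3b
    + (D x t * mT x t) * h4
    - (c x t) * h6
    - (D x t * b x t) * h7
end

section
/- Let φ : ℝ² × ℝ → ℝ², f : ℝ² × ℝ → ℝ, u_S, w_S : ℝ² × ℝ → ℝ², u_T, w_T : ℝ² × ℝ → ℝ, v_S : ℝ² → ℝ² and v_T : ℝ² → ℝ all be smooth, with φ(·,t) surjective for each t, and suppose: ∂_t φ(X,t) = u_S(φ(X,t),t), ∂_t f(X,t) = u_T(φ(X,t),t), w_S(φ(X,t),t) = D_X φ(X,t) · v_S(X), and w_T(φ(X,t),t) = ∇_X f(X,t)·v_S(X) + v_T(X) for all X and t. Then ∂_t w_S + [u_S, w_S] = 0 and ∂_t w_T + u_S·∇w_T − w_S·∇u_T = 0 on ℝ² × ℝ; consequently the relabelling (ψ, g) generated by (v_S, v_T) leaves the Eulerian velocity (u_S, u_T) invariant. -/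
private lemma spaceFD {α : Type*} [NormedAddCommGroup α] [NormedSpace ℝ α]
    {F : (ℝ × ℝ) × ℝ → α} {A : (ℝ × ℝ) × ℝ →L[ℝ] α} {X : ℝ × ℝ} {t : ℝ}
    (hF : HasFDerivAt F A (X, t)) :
    HasFDerivAt (fun Y => F (Y, t)) (A.comp (ContinuousLinearMap.inl ℝ (ℝ × ℝ) ℝ)) X :=
  hF.comp X (hasFDerivAt_prodMk_left X t)

private lemma timeD {α : Type*} [NormedAddCommGroup α] [NormedSpace ℝ α]
    {F : (ℝ × ℝ) × ℝ → α} {A : (ℝ × ℝ) × ℝ →L[ℝ] α} {X : ℝ × ℝ} {t : ℝ}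
    (hF : HasFDerivAt F A (X, t)) :
    HasDerivAt (fun τ => F (X, τ)) (A (0, 1)) t := by
  have h := hF.comp_hasDerivAt t ((hasDerivAt_const t X).prodMk (hasDerivAt_id t))
  exact h

private lemma key_s18 {α : Type*} [NormedAddCommGroup α] [NormedSpace ℝ α]
    (φ : (ℝ × ℝ) → ℝ → ℝ × ℝ) (uS wS : (ℝ × ℝ) → ℝ → ℝ × ℝ)
    (g w ug : (ℝ × ℝ) → ℝ → α)
    (vS : ℝ × ℝ → ℝ × ℝ) (c : ℝ × ℝ → α)
    (hφ : Smooth2 φ) (hg : Smooth2 g) (hug : Smooth2 ug) (hw : Smooth2 w)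
    (hsurj : ∀ t : ℝ, Function.Surjective (fun X => φ X t))
    (hflowS : ∀ X t, deriv (fun τ => φ X τ) t = uS (φ X t) t)
    (hflowg : ∀ X t, deriv (fun τ => g X τ) t = ug (φ X t) t)
    (hwSdef : ∀ X t, wS (φ X t) t = fderiv ℝ (fun Y => φ Y t) X (vS X))
    (hwdef : ∀ X t, w (φ X t) t = fderiv ℝ (fun Y => g Y t) X (vS X) + c X) :
    ∀ (x : ℝ × ℝ) (t : ℝ), pt w x t + dsp w x t (uS x t) - dsp ug x t (wS x t) = 0 := by
  intro x t
  obtain ⟨X, hX⟩ := hsurj t x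
  simp only at hX
  -- joint maps
  set Jφ : (ℝ × ℝ) × ℝ → ℝ × ℝ := fun p => φ p.1 p.2 with hJφdef
  set Jg : (ℝ × ℝ) × ℝ → α := fun p => g p.1 p.2 with hJgdef
  set Jw : (ℝ × ℝ) × ℝ → α := fun p => w p.1 p.2 with hJwdef
  set Jug : (ℝ × ℝ) × ℝ → α := fun p => ug p.1 p.2 with hJugdef
  have hJφ : ∀ p : (ℝ × ℝ) × ℝ, HasFDerivAt Jφ (fderiv ℝ Jφ p) p :=
    fun p => (hφ.differentiable (by simp) p).hasFDerivAt
  have hJg : ∀ p : (ℝ × ℝ) × ℝ, HasFDerivAt Jg (fderiv ℝ Jg p) p :=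
    fun p => (hg.differentiable (by simp) p).hasFDerivAt
  have hJw : ∀ p : (ℝ × ℝ) × ℝ, HasFDerivAt Jw (fderiv ℝ Jw p) p :=
    fun p => (hw.differentiable (by simp) p).hasFDerivAt
  have hJug : ∀ p : (ℝ × ℝ) × ℝ, HasFDerivAt Jug (fderiv ℝ Jug p) p :=
    fun p => (hug.differentiable (by simp) p).hasFDerivAt
  set Ag : (ℝ × ℝ) × ℝ → ((ℝ × ℝ) × ℝ →L[ℝ] α) := fderiv ℝ Jg with hAgdef
  -- Ag is C¹
  have hAgC1 : ContDiff ℝ 1 Ag := hg.fderiv_right (WithTop.coe_le_coe.mpr le_top)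
  have hAg : ∀ p, HasFDerivAt Ag (fderiv ℝ Ag p) p :=
    fun p => (hAgC1.differentiable one_ne_zero p).hasFDerivAt
  set B : (ℝ × ℝ) × ℝ →L[ℝ] ((ℝ × ℝ) × ℝ →L[ℝ] α) := fderiv ℝ Ag (X, t) with hBdef
  -- spatial fderiv of g equals joint restriction
  have hspace_g : ∀ (Y : ℝ × ℝ) (τ : ℝ) (v : ℝ × ℝ),
      fderiv ℝ (fun Z => g Z τ) Y v = Ag (Y, τ) (v, 0) := by
    intro Y τ v
    have h' : fderiv ℝ (fun Z => g Z τ) Y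
        = (Ag (Y, τ)).comp (ContinuousLinearMap.inl ℝ (ℝ × ℝ) ℝ) :=
      (spaceFD (hJg (Y, τ))).fderiv
    rw [h']
    rfl
  -- Step A : the two functions of τ agree
  have hfun : (fun τ => w (φ X τ) τ) = fun τ => Ag (X, τ) (vS X, 0) + c X := by
    funext τ
    rw [hwdef X τ, hspace_g X τ (vS X)]
  -- Step B : derivative of LHS
  have hcurve : HasDerivAt (fun τ => φ X τ) (uS x t) t := by
    have h := timeD (hJφ (X, t))
    have h2 : deriv (fun τ => φ X τ) t = fderiv ℝ Jφ (X, t) (0, 1) := h.deriv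
    have h3 : fderiv ℝ Jφ (X, t) (0, 1) = uS x t := by
      rw [← h2, hflowS X t, hX]
    rwa [h3] at h
  have hB : HasDerivAt (fun τ => w (φ X τ) τ)
      (dsp w x t (uS x t) + pt w x t) t := by
    have hc : HasDerivAt (fun τ => ((φ X τ, τ) : (ℝ × ℝ) × ℝ)) ((uS x t, 1)) t :=
      hcurve.prodMk (hasDerivAt_id t)
    have h : HasDerivAt (fun τ => Jw (φ X τ, τ)) (fderiv ℝ Jw (x, t) (uS x t, 1)) t := by
      refine HasFDerivAt.comp_hasDerivAt (l := Jw) (l' := fderiv ℝ Jw (x, t)) t ?_ hc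
      show HasFDerivAt Jw _ (φ X t, t)
      rw [hX]
      exact hJw (x, t)
    have hval : fderiv ℝ Jw (x, t) (uS x t, 1) = dsp w x t (uS x t) + pt w x t := by
      have hsplit : ((uS x t, 1) : (ℝ × ℝ) × ℝ) = (uS x t, 0) + (0, 1) := by simp
      rw [hsplit, map_add]
      congr 1
      · have h' : fderiv ℝ (fun y => w y t) x
            = (fderiv ℝ Jw (x, t)).comp (ContinuousLinearMap.inl ℝ (ℝ × ℝ) ℝ) :=
          (spaceFD (hJw (x, t))).fderiv
        show fderiv ℝ Jw (x, t) (uS x t, 0) = dsp w x t (uS x t)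
        show fderiv ℝ Jw (x, t) (uS x t, 0) = fderiv ℝ (fun y => w y t) x (uS x t)
        rw [h']
        rfl
      · exact ((timeD (hJw (x, t))).deriv).symm
    rw [← hval]
    exact h
  -- Step C : derivative of RHS
  have hCtime : HasDerivAt (fun τ => Ag (X, τ)) (B (0, 1)) t := timeD (hAg (X, t))
  have hC1 : HasDerivAt (fun τ => Ag (X, τ) (vS X, 0)) (B (0, 1) (vS X, 0)) t := by
    have h := hCtime.clm_apply (hasDerivAt_const t ((vS X, 0) : (ℝ × ℝ) × ℝ))
    simpa using h
  have hC : HasDerivAt (fun τ => Ag (X, τ) (vS X, 0) + c X) (B (0, 1) (vS X, 0)) t :=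
    hC1.add_const (c X)
  -- symmetry of second derivative
  have hsym : B (0, 1) (vS X, 0) = B (vS X, 0) (0, 1) := by
    have h := (hg.contDiffAt (x := (X, t))).isSymmSndFDerivAt (by rw [minSmoothness_of_isRCLikeNormedField]; exact WithTop.coe_le_coe.mpr le_top)
    exact h _ _
  -- identify B (vS X,0) (0,1) with dsp ug x t (wS x t)
  have hval2 : B (vS X, 0) (0, 1) = dsp ug x t (wS x t) := by
    -- p ↦ Ag p (0,1) has fderiv B · (0,1) direction-wise at (X,t)
    have heval : HasFDerivAt (fun p => Ag p (0, 1))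
        ((ContinuousLinearMap.apply ℝ α ((0, 1) : (ℝ × ℝ) × ℝ)).comp B) (X, t) :=
      (ContinuousLinearMap.apply ℝ α ((0, 1) : (ℝ × ℝ) × ℝ)).hasFDerivAt.comp _ (hAg (X, t))
    -- and that function equals p ↦ ug (φ p.1 p.2) p.2
    have hfun2 : (fun p : (ℝ × ℝ) × ℝ => Ag p (0, 1)) = fun p => Jug (Jφ p, p.2) := by
      funext p
      have h1 : Ag p (0, 1) = deriv (fun τ => g p.1 τ) p.2 := by
        cases p with
        | mk Y τ => exact ((timeD (hJg (Y, τ))).deriv).symm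
      rw [h1, hflowg p.1 p.2]
    -- fderiv of the composed map
    have hinner : HasFDerivAt (fun p : (ℝ × ℝ) × ℝ => ((Jφ p, p.2) : (ℝ × ℝ) × ℝ))
        ((fderiv ℝ Jφ (X, t)).prod (ContinuousLinearMap.snd ℝ (ℝ × ℝ) ℝ)) (X, t) :=
      (hJφ (X, t)).prodMk (hasFDerivAt_snd)
    have hcomp : HasFDerivAt (fun p : (ℝ × ℝ) × ℝ => Jug (Jφ p, p.2))
        ((fderiv ℝ Jug (x, t)).comp
          ((fderiv ℝ Jφ (X, t)).prod (ContinuousLinearMap.snd ℝ (ℝ × ℝ) ℝ))) (X, t) := by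
      refine HasFDerivAt.comp (g := Jug) (g' := fderiv ℝ Jug (x, t)) _ ?_ hinner
      show HasFDerivAt Jug _ (Jφ (X, t), t)
      rw [show Jφ (X, t) = x from hX]
      exact hJug (x, t)
    have heq2 : HasFDerivAt (fun p : (ℝ × ℝ) × ℝ => Ag p (0, 1))
        ((fderiv ℝ Jug (x, t)).comp
          ((fderiv ℝ Jφ (X, t)).prod (ContinuousLinearMap.snd ℝ (ℝ × ℝ) ℝ))) (X, t) := by
      rw [hfun2]; exact hcomp
    have huniq := heval.unique heq2
    have : B (vS X, 0) (0, 1) = fderiv ℝ Jug (x, t) (fderiv ℝ Jφ (X, t) (vS X, 0), 0) := by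
      have := congrArg (fun (L : (ℝ × ℝ) × ℝ →L[ℝ] α) => L ((vS X, 0) : (ℝ × ℝ) × ℝ)) huniq
      simpa using this
    rw [this]
    have hwval : fderiv ℝ Jφ (X, t) (vS X, 0) = wS x t := by
      have h' : fderiv ℝ (fun Y => φ Y t) X
          = (fderiv ℝ Jφ (X, t)).comp (ContinuousLinearMap.inl ℝ (ℝ × ℝ) ℝ) :=
        (spaceFD (hJφ (X, t))).fderiv
      rw [← hX, hwSdef X t, h']
      rfl
    rw [hwval]
    have h' : fderiv ℝ (fun y => ug y t) x
        = (fderiv ℝ Jug (x, t)).comp (ContinuousLinearMap.inl ℝ (ℝ × ℝ) ℝ) :=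
      (spaceFD (hJug (x, t))).fderiv
    show fderiv ℝ Jug (x, t) (wS x t, 0) = fderiv ℝ (fun y => ug y t) x (wS x t)
    rw [h']
    rfl
  -- combine
  rw [hfun] at hB
  have := hB.unique hC
  rw [hsym, hval2] at this
  rw [sub_eq_zero, ← this]
  abel

/-- The Eulerian generator `(w_S, w_T)` of a time-independent relabelling perturbation
`δ(φ,f) = (D_Xφ·v_S, ∇_X f·v_S + v_T)` of the slice flow map satisfies
`∂_t w_S + [u_S, w_S] = 0` and `∂_t w_T + u_S·∇w_T − w_S·∇u_T = 0`; i.e., the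
relabelling leaves the Eulerian velocity `(u_S, u_T)` invariant. -/

theorem relabelling_generator_equations
    (φ : (ℝ × ℝ) → ℝ → ℝ × ℝ) (f : (ℝ × ℝ) → ℝ → ℝ)
    (uS wS : (ℝ × ℝ) → ℝ → ℝ × ℝ) (uT wT : (ℝ × ℝ) → ℝ → ℝ)
    (vS : ℝ × ℝ → ℝ × ℝ) (vT : ℝ × ℝ → ℝ)
    (hφ : Smooth2 φ) (hf : Smooth2 f) (huS : Smooth2 uS) (hwS : Smooth2 wS)
    (huT : Smooth2 uT) (hwT : Smooth2 wT)
    (hvS : ContDiff ℝ (⊤ : ℕ∞) vS) (hvT : ContDiff ℝ (⊤ : ℕ∞) vT)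
    (hsurj : ∀ t : ℝ, Function.Surjective (fun X => φ X t))
    (hflowS : ∀ X t, deriv (fun τ => φ X τ) t = uS (φ X t) t)
    (hflowT : ∀ X t, deriv (fun τ => f X τ) t = uT (φ X t) t)
    (hwSdef : ∀ X t, wS (φ X t) t = fderiv ℝ (fun Y => φ Y t) X (vS X))
    (hwTdef : ∀ X t, wT (φ X t) t = fderiv ℝ (fun Y => f Y t) X (vS X) + vT X) :
    ∀ (x : ℝ × ℝ) (t : ℝ),
      pt wS x t + dsp wS x t (uS x t) - dsp uS x t (wS x t) = 0 ∧
      pt wT x t + dsp wT x t (uS x t) - dsp uT x t (wS x t) = 0 := by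
  intro x t
  refine ⟨?_, ?_⟩
  · exact key_s18 φ uS wS φ wS uS vS (fun _ => 0) hφ hφ huS hwS hsurj hflowS hflowS hwSdef
      (fun X t => by rw [hwSdef X t]; simp) x t
  · exact key_s18 φ uS wS f wT uT vS vT hφ hf huT hwT hsurj hflowS hflowT hwSdef hwTdef x t
end
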